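/- Suppose positive reals ã_bi, ã_iw, ã_bj, ã_jw satisfy ã_bi * ã_iw = ã_bj * ã_jw, where a_bi * a_iw < a_bj * a_jw, and let ε = (a_bj a_jw - a_bi a_iw)/(a_bi + a_iw + a_bj + a_jw). Then max(|ã_bi - a_bi|, |ã_iw - a_iw|, |ã_bj - a_bj|, |ã_jw - a_jw|) ≥ ε. -/

import Mathlib

/-! If every entry moved by less than `ε`, then
`ta_bi * ta_iw < (a_bi + ε) * (a_iw + ε) = (a_bj - ε) * (a_jw - ε) < ta_bj * ta_jw`,
contradicting consistency; the right-hand bound needs `ε < a_bj, a_jw`. -/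

/-- The shift `ε` of the paper: the root of `(p + ε) * (q + ε) = (r - ε) * (s - ε)`, which is linear
in `ε` because the quadratic terms cancel. -/
noncomputable def balancingShift (p q r s : ℝ) : ℝ := (r * s - p * q) / (p + q + r + s)

lemma add_mul_add_balancingShift {p q r s : ℝ} (hsum : p + q + r + s ≠ 0) :
    (p + balancingShift p q r s) * (q + balancingShift p q r s) =
      (r - balancingShift p q r s) * (s - balancingShift p q r s) := by
  unfold balancingShift
  field_simp
  ring

lemma balancingShift_lt {p q r s : ℝ} (hp : 0 < p) (hq : 0 < q) (hr : 0 < r) (hs : 0 < s) :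
    balancingShift p q r s < r ∧ balancingShift p q r s < s := by
  have hsum : 0 < p + q + r + s := by positivity
  unfold balancingShift
  constructor <;> rw [div_lt_iff₀ hsum] <;> nlinarith [mul_pos hp hq, mul_pos hr hp, mul_pos hs hp]

theorem stmt_5_general (a_bi a_iw a_bj a_jw : ℝ)
    (hbi : 0 < a_bi) (hiw : 0 < a_iw) (hbj : 0 < a_bj) (hjw : 0 < a_jw)
    (ta_bi ta_iw ta_bj ta_jw : ℝ)
    (htbi : 0 < ta_bi) (htiw : 0 < ta_iw)
    (hcons : ta_bi * ta_iw = ta_bj * ta_jw) :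
    let ε := (a_bj * a_jw - a_bi * a_iw) / (a_bi + a_iw + a_bj + a_jw)
    ε ≤ max (max |ta_bi - a_bi| |ta_iw - a_iw|) (max |ta_bj - a_bj| |ta_jw - a_jw|) := by
  change balancingShift a_bi a_iw a_bj a_jw ≤ _
  set ε := balancingShift a_bi a_iw a_bj a_jw
  by_contra! hlt
  simp only [max_lt_iff, abs_lt] at hlt
  obtain ⟨⟨⟨-, hbi_lt⟩, ⟨-, hiw_lt⟩⟩, ⟨⟨hbj_gt, -⟩, ⟨hjw_gt, -⟩⟩⟩ := hlt
  obtain ⟨hε_bj, hε_jw⟩ := balancingShift_lt hbi hiw hbj hjw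
  have hsum : a_bi + a_iw + a_bj + a_jw ≠ 0 := by positivity
  have hupper : ta_bi * ta_iw < (a_bi + ε) * (a_iw + ε) :=
    mul_lt_mul'' (by linarith) (by linarith) htbi.le htiw.le
  have hlower : (a_bj - ε) * (a_jw - ε) < ta_bj * ta_jw :=
    mul_lt_mul'' (by linarith) (by linarith) (by linarith) (by linarith)
  rw [add_mul_add_balancingShift hsum] at hupper
  linarith

theorem stmt_5 (a_bi a_iw a_bj a_jw : ℝ)
    (hbi : 0 < a_bi) (hiw : 0 < a_iw) (hbj : 0 < a_bj) (hjw : 0 < a_jw)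
    (h : a_bi * a_iw < a_bj * a_jw)
    (ta_bi ta_iw ta_bj ta_jw : ℝ)
    (htbi : 0 < ta_bi) (htiw : 0 < ta_iw) (htbj : 0 < ta_bj) (htjw : 0 < ta_jw)
    (hcons : ta_bi * ta_iw = ta_bj * ta_jw) :
    let ε := (a_bj * a_jw - a_bi * a_iw) / (a_bi + a_iw + a_bj + a_jw)
    ε ≤ max (max |ta_bi - a_bi| |ta_iw - a_iw|) (max |ta_bj - a_bj| |ta_jw - a_jw|) :=
  stmt_5_general a_bi a_iw a_bj a_jw hbi hiw hbj hjw ta_bi ta_iw ta_bj ta_jw htbi htiw hcons
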